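/- (Lemma 4 of the Supplementary Material: convolution powers overlap with their unit shift.) Let p : ℤ → ℝ be a probability mass function (p(n) ≥ 0, Σ_n p(n) = 1) with finite support containing at least two points, let n₀ be the minimum of the support of p, and assume gcd{n − n₀ : p(n) > 0} = 1. Then there exists a positive integer L such that the L-fold convolution p^{*L} (the distribution of the sum of L independent random variables each distributed according to p) satisfies (1/2)·Σ_{n∈ℤ} |p^{*L}(n) − p^{*L}(n+1)| < 1; indeed there is an integer K with p^{*L}(K) > 0 and p^{*L}(K−1) > 0. -/

import Mathlib

open Matrix Complex Filter Kronecker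
open scoped ComplexOrder

noncomputable section

/-- n-fold Kronecker power of a matrix, indexed by functions `Fin n → Fin d`. -/
def kronPow {d : ℕ} (X : Matrix (Fin d) (Fin d) ℂ) (n : ℕ) :
    Matrix (Fin n → Fin d) (Fin n → Fin d) ℂ :=
  Matrix.of fun i j => ∏ k, X (i k) (j k)

/-- The `n`-copy (non-interacting) Hamiltonian `Σᵢ I^{⊗(i-1)} ⊗ H ⊗ I^{⊗(n-i)}`. -/
def nCopyHam {d : ℕ} (H : Matrix (Fin d) (Fin d) ℂ) (n : ℕ) :
    Matrix (Fin n → Fin d) (Fin n → Fin d) ℂ :=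
  ∑ k : Fin n, Matrix.of fun i j =>
    H (i k) (j k) * ∏ l ∈ Finset.univ.erase k, (if i l = j l then (1 : ℂ) else 0)

/-- Time evolution unitary `e^{-iHt}`. -/
def timeEvol {m : Type*} [Fintype m] [DecidableEq m] (H : Matrix m m ℂ) (t : ℝ) :
    Matrix m m ℂ :=
  NormedSpace.exp ((-(Complex.I * (t : ℂ))) • H)

/-- Trace norm `‖A‖₁ = Tr √(AᴴA)`. -/
def traceNorm {m : Type*} [Fintype m] [DecidableEq m] (A : Matrix m m ℂ) : ℝ :=
  (((Matrix.posSemidef_conjTranspose_mul_self A).1.eigenvectorUnitary.1 *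
      diagonal ((fun x : ℝ => (x : ℂ)) ∘ Real.sqrt ∘ (Matrix.posSemidef_conjTranspose_mul_self A).1.eigenvalues) *
      (star (Matrix.posSemidef_conjTranspose_mul_self A).1.eigenvectorUnitary : Matrix m m ℂ)).trace).re

/-- A quantum channel: a map admitting a Kraus representation. -/
def IsQuantumChannel {m n : Type*} [Fintype m] [DecidableEq m] [Fintype n] [DecidableEq n]
    (E : Matrix m m ℂ → Matrix n n ℂ) : Prop :=
  ∃ (K : ℕ) (A : Fin K → Matrix n m ℂ),
    (∀ X, E X = ∑ k, A k * X * (A k)ᴴ) ∧ (∑ k, (A k)ᴴ * A k = 1)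

/-- Time-translation invariance of a map w.r.t. input/output Hamiltonians. -/
def IsTI {m n : Type*} [Fintype m] [DecidableEq m] [Fintype n] [DecidableEq n]
    (Hin : Matrix m m ℂ) (Hout : Matrix n n ℂ)
    (E : Matrix m m ℂ → Matrix n n ℂ) : Prop :=
  ∀ (t : ℝ) (X : Matrix m m ℂ),
    timeEvol Hout t * E X * timeEvol Hout (-t) =
      E (timeEvol Hin t * X * timeEvol Hin (-t))

/-- Energy variance of a (unit) vector. -/
def varVec {m : Type*} [Fintype m] (H : Matrix m m ℂ) (ψ : m → ℂ) : ℝ :=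
  (star ψ ⬝ᵥ ((H * H) *ᵥ ψ)).re - ((star ψ ⬝ᵥ (H *ᵥ ψ)).re) ^ 2

/-- The quantum Fisher information formula for a given spectral decomposition data. -/
def qfiOf {m : Type*} [Fintype m] (H : Matrix m m ℂ) (p : m → ℝ) (φ : m → m → ℂ) : ℝ :=
  2 * ∑ j, ∑ k,
    if 0 < p j + p k then
      (p j - p k) ^ 2 / (p j + p k) * Complex.normSq (star (φ j) ⬝ᵥ (H *ᵥ φ k))
    else 0

/-- Quantum Fisher information of a Hermitian (e.g. density) matrix `ρ` w.r.t. `H`. -/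
def QFI {m : Type*} [Fintype m] [DecidableEq m] {ρ : Matrix m m ℂ}
    (hρ : ρ.IsHermitian) (H : Matrix m m ℂ) : ℝ :=
  qfiOf H hρ.eigenvalues (fun j i => hρ.eigenvectorBasis j i)

open scoped Classical in
/-- Total positive-semidefinite square root (zero on non-PSD inputs). -/
def msqrt {m : Type*} [Fintype m] [DecidableEq m] (A : Matrix m m ℂ) : Matrix m m ℂ :=
  if h : A.PosSemidef then
    h.1.eigenvectorUnitary.1 * diagonal ((fun x : ℝ => (x : ℂ)) ∘ Real.sqrt ∘ h.1.eigenvalues) *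
      (star h.1.eigenvectorUnitary : Matrix m m ℂ)
  else 0

/-- Fidelity `Fid(ρ,σ) = (Tr √(√ρ σ √ρ))² = ‖√σ √ρ‖₁²`. -/
def fid {m : Type*} [Fintype m] [DecidableEq m] (ρ σ : Matrix m m ℂ) : ℝ :=
  (traceNorm (msqrt σ * msqrt ρ)) ^ 2

/-- Density matrix. -/
def IsDensityMatrix {m : Type*} [Fintype m] (ρ : Matrix m m ℂ) : Prop :=
  ρ.PosSemidef ∧ ρ.trace = 1


/-- Convolution of two probability mass functions on `ℤ`. -/
def conv (p q : ℤ → ℝ) : ℤ → ℝ := fun n => ∑' m : ℤ, p m * q (n - m)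

/-- `L`-fold convolution power of a probability mass function on `ℤ`. -/
def convPow (p : ℤ → ℝ) : ℕ → ℤ → ℝ
  | 0 => fun n => if n = 0 then 1 else 0
  | (L + 1) => conv p (convPow p L)

/-!
The pairs `(L, n)` with `p^{*L}(n) > 0` form an additive submonoid of `ℕ × ℤ` containing `(1, n)`
for every `n` in the support of `p`. Its image under `(L, n) ↦ n - L n₀` is a submonoid of `ℤ`
containing every `n - n₀`; by the gcd hypothesis it generates `ℤ` as a group, so it contains
`a`, `b` with `a - b = 1`. Padding the two witnesses with copies of `n₀` up to a common length `L`
gives adjacent points `K - 1`, `K` charged by `p^{*L}`, and then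
`∑ |q n - q (n + 1)| < ∑ (q n + q (n + 1)) = 2` strictly.
-/

section Convolution

variable {p q : ℤ → ℝ}

lemma summable_mul_comp_sub (hp : p.support.Finite) (q : ℤ → ℝ) (n : ℤ) :
    Summable fun m => p m * q (n - m) :=
  summable_of_hasFiniteSupport (hp.subset (Function.support_mul_subset_left _ _))

lemma conv_nonneg (hp : ∀ n, 0 ≤ p n) (hq : ∀ n, 0 ≤ q n) (n : ℤ) : 0 ≤ conv p q n :=
  tsum_nonneg fun m => mul_nonneg (hp m) (hq _)

lemma conv_pos_iff (hp : ∀ n, 0 ≤ p n) (hq : ∀ n, 0 ≤ q n) (hpf : p.support.Finite) (n : ℤ) :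
    0 < conv p q n ↔ ∃ m, 0 < p m ∧ 0 < q (n - m) := by
  constructor
  · intro hn
    by_contra! h
    have hzero : ∀ m, p m * q (n - m) = 0 := fun m => by
      rcases (hp m).eq_or_lt with hm | hm
      · rw [← hm, zero_mul]
      · rw [le_antisymm (h m hm) (hq _), mul_zero]
    simp [conv, hzero] at hn
  · rintro ⟨m, hm, hnm⟩
    exact (summable_mul_comp_sub hpf q n).tsum_pos (fun k => mul_nonneg (hp k) (hq _)) m
      (mul_pos hm hnm)

lemma support_conv_subset (p q : ℤ → ℝ) :
    (conv p q).support ⊆ Set.image2 (· + ·) p.support q.support := by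
  intro n hn
  by_contra h
  have hzero : ∀ m, p m * q (n - m) = 0 := fun m => by
    by_contra hm
    exact h ⟨m, left_ne_zero_of_mul hm, n - m, right_ne_zero_of_mul hm, add_sub_cancel m n⟩
  simp [conv, hzero] at hn

lemma tsum_conv (hpf : p.support.Finite) (hqf : q.support.Finite) :
    ∑' n, conv p q n = (∑' n, p n) * ∑' n, q n := by
  have hsummable : Summable (Function.uncurry fun n m => p m * q (n - m)) := by
    refine summable_of_hasFiniteSupport <| ((hpf.prod hqf).image fun x => (x.1 + x.2, x.1)).subset
      fun x hx => ⟨(x.2, x.1 - x.2), ⟨left_ne_zero_of_mul hx, right_ne_zero_of_mul hx⟩, by simp⟩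
  calc ∑' n, conv p q n = ∑' m, ∑' n, p m * q (n - m) := hsummable.tsum_comm.symm
    _ = ∑' m, p m * ∑' n, q n := by
        refine tsum_congr fun m => ?_
        rw [tsum_mul_left, ← (Equiv.subRight m).tsum_eq q]; rfl
    _ = (∑' n, p n) * ∑' n, q n := tsum_mul_right

end Convolution

section ConvolutionPower

variable {p : ℤ → ℝ}

lemma convPow_zero_apply (n : ℤ) : convPow p 0 n = if n = 0 then 1 else 0 := rfl

lemma convPow_succ (L : ℕ) : convPow p (L + 1) = conv p (convPow p L) := rfl

lemma convPow_zero_pos_iff {n : ℤ} : 0 < convPow p 0 n ↔ n = 0 := by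
  by_cases h : n = 0 <;> simp [convPow_zero_apply, h]

lemma convPow_one (p : ℤ → ℝ) : convPow p 1 = p := by
  ext n
  simp only [convPow_succ, conv, convPow_zero_apply, sub_eq_zero, eq_comm (a := n), mul_ite,
    mul_one, mul_zero]
  exact tsum_ite_eq n p

lemma convPow_nonneg (hp : ∀ n, 0 ≤ p n) : ∀ L n, 0 ≤ convPow p L n
  | 0, n => by rw [convPow_zero_apply]; split_ifs <;> norm_num
  | L + 1, n => conv_nonneg hp (convPow_nonneg hp L) n

lemma support_convPow_finite (hpf : p.support.Finite) : ∀ L, (convPow p L).support.Finite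
  | 0 => (Set.finite_singleton 0).subset fun n hn => by
      by_contra h
      exact hn (if_neg h)
  | L + 1 => (hpf.image2 _ (support_convPow_finite hpf L)).subset (support_conv_subset _ _)

lemma tsum_convPow (hpf : p.support.Finite) (hsum : ∑' n, p n = 1) :
    ∀ L, ∑' n, convPow p L n = 1
  | 0 => by simp [convPow_zero_apply]
  | L + 1 => by
      rw [convPow_succ, tsum_conv hpf (support_convPow_finite hpf L), hsum,
        tsum_convPow hpf hsum L, one_mul]

lemma convPow_add_pos (hp : ∀ n, 0 ≤ p n) (hpf : p.support.Finite) :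
    ∀ {L L' : ℕ} {a b : ℤ}, 0 < convPow p L a → 0 < convPow p L' b →
      0 < convPow p (L + L') (a + b)
  | 0, L', a, b, ha, hb => by
      rw [convPow_zero_pos_iff.mp ha, zero_add, zero_add]
      exact hb
  | L + 1, L', a, b, ha, hb => by
      obtain ⟨m, hm, ham⟩ := (conv_pos_iff hp (convPow_nonneg hp L) hpf a).mp ha
      rw [Nat.add_right_comm, convPow_succ, conv_pos_iff hp (convPow_nonneg hp _) hpf]
      exact ⟨m, hm, by simpa [sub_add_eq_add_sub] using convPow_add_pos hp hpf ham hb⟩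

def convPowPosSubmonoid (hp : ∀ n, 0 ≤ p n) (hpf : p.support.Finite) :
    AddSubmonoid (ℕ × ℤ) where
  carrier := {x | 0 < convPow p x.1 x.2}
  add_mem' := convPow_add_pos hp hpf
  zero_mem' := convPow_zero_pos_iff.mpr rfl

end ConvolutionPower

lemma AddSubgroup.exists_sub_eq_of_mem_closure_addSubmonoid {G : Type*} [AddCommGroup G]
    {N : AddSubmonoid G} {x : G} (hx : x ∈ AddSubgroup.closure (N : Set G)) :
    ∃ a ∈ N, ∃ b ∈ N, a - b = x := by
  induction hx using AddSubgroup.closure_induction with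
  | mem y hy => exact ⟨y, hy, 0, N.zero_mem, sub_zero y⟩
  | zero => exact ⟨0, N.zero_mem, 0, N.zero_mem, sub_zero 0⟩
  | add y z _ _ ihy ihz =>
    obtain ⟨a, ha, b, hb, rfl⟩ := ihy
    obtain ⟨a', ha', b', hb', rfl⟩ := ihz
    exact ⟨a + a', N.add_mem ha ha', b + b', N.add_mem hb hb', add_sub_add_comm a a' b b'⟩
  | neg y _ ih =>
    obtain ⟨a, ha, b, hb, rfl⟩ := ih
    exact ⟨b, hb, a, ha, (neg_sub a b).symm⟩

lemma Int.one_mem_addSubgroupClosure_of_forall_dvd {S : Set ℤ}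
    (hS : ∀ e : ℕ, (∀ x ∈ S, (e : ℤ) ∣ x) → e = 1) : (1 : ℤ) ∈ AddSubgroup.closure S := by
  obtain ⟨g, hg⟩ := Int.subgroup_cyclic (AddSubgroup.closure S)
  rw [← AddSubgroup.zmultiples_eq_closure] at hg
  have hg_dvd : ∀ x ∈ S, (g.natAbs : ℤ) ∣ x := fun x hx => Int.natAbs_dvd.mpr <|
    Int.mem_zmultiples_iff.mp (hg ▸ AddSubgroup.subset_closure hx)
  rw [hg, Int.mem_zmultiples_iff, ← Int.natAbs_dvd, hS _ hg_dvd, Nat.cast_one]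

lemma half_tsum_abs_sub_shift_lt_one {q : ℤ → ℝ} (hq : ∀ n, 0 ≤ q n) (hsummable : Summable q)
    (hsum : ∑' n, q n = 1) {K : ℤ} (hK : 0 < q K) (hK' : 0 < q (K - 1)) :
    (1 / 2) * ∑' n, |q n - q (n + 1)| < 1 := by
  have hshift : Summable fun n => q (n + 1) :=
    hsummable.comp_injective (add_left_injective 1)
  have hshift_sum : ∑' n, q (n + 1) = 1 := ((Equiv.addRight 1).tsum_eq q).trans hsum
  have hlt : ∑' n, |q n - q (n + 1)| < ∑' n, (q n + q (n + 1)) := by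
    refine Summable.tsum_lt_tsum (i := K - 1) (fun n => abs_sub_le_iff.mpr ?_) ?_
      (hsummable.sub hshift).abs (hsummable.add hshift)
    · constructor <;> linarith [hq n, hq (n + 1)]
    · rw [sub_add_cancel, abs_sub_lt_iff]
      constructor <;> linarith
  rw [hsummable.tsum_add hshift, hsum, hshift_sum] at hlt
  linarith

lemma exists_convPow_pos_of_gcd_eq_one {p : ℤ → ℝ} (hp : ∀ n, 0 ≤ p n)
    (hpf : p.support.Finite) {n₀ : ℤ} (hn₀ : 0 < p n₀)
    (hgcd : ∀ e : ℕ, (∀ n, 0 < p n → (e : ℤ) ∣ (n - n₀)) → e = 1) :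
    ∃ L K, 0 < convPow p L K ∧ 0 < convPow p L (K - 1) := by
  set M := convPowPosSubmonoid hp hpf
  have hmem_one {n : ℤ} (hn : 0 < p n) : ((1, n) : ℕ × ℤ) ∈ M := by
    change 0 < convPow p 1 n
    rwa [convPow_one]
  let drift : ℕ × ℤ →+ ℤ := AddMonoidHom.mk' (fun x => x.2 - x.1 * n₀) fun x y => by
    simp only [Prod.fst_add, Prod.snd_add, Nat.cast_add]; ring
  obtain ⟨_, ⟨u, hu, rfl⟩, _, ⟨v, hv, rfl⟩, huv⟩ :=
    AddSubgroup.exists_sub_eq_of_mem_closure_addSubmonoid <|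
      Int.one_mem_addSubgroupClosure_of_forall_dvd (S := M.map drift) fun e he =>
        hgcd e fun n hn => he _ ⟨(1, n), hmem_one hn, by simp [drift]⟩
  have hpad {w : ℕ × ℤ} (hw : w ∈ M) (k : ℕ) : 0 < convPow p (w.1 + k) (w.2 + k * n₀) := by
    have h := M.add_mem hw (M.nsmul_mem (hmem_one hn₀) k)
    rwa [Prod.smul_mk, smul_eq_mul, mul_one, nsmul_eq_mul] at h
  simp only [drift, AddMonoidHom.mk'_apply] at huv
  refine ⟨u.1 + v.1, u.2 + v.1 * n₀, hpad hu v.1, ?_⟩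
  convert hpad hv u.1 using 2
  · exact add_comm _ _
  · linarith

theorem convolution_power_overlaps_unit_shift_general
    (p : ℤ → ℝ) (hp : ∀ n, 0 ≤ p n)
    (hfin : (Function.support p).Finite)
    (hsum : ∑' n : ℤ, p n = 1)
    (n₀ : ℤ) (hn₀ : 0 < p n₀)
    (hgcd : ∀ e : ℕ, (∀ n, 0 < p n → (e : ℤ) ∣ (n - n₀)) → e = 1) :
    ∃ L : ℕ, 0 < L ∧
      (1 / 2) * ∑' n : ℤ, |convPow p L n - convPow p L (n + 1)| < 1 ∧
      ∃ K : ℤ, 0 < convPow p L K ∧ 0 < convPow p L (K - 1) := by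
  obtain ⟨L, K, hK, hK'⟩ := exists_convPow_pos_of_gcd_eq_one hp hfin hn₀ hgcd
  refine ⟨L, Nat.pos_of_ne_zero ?_, ?_, K, hK, hK'⟩
  · rintro rfl
    rw [convPow_zero_pos_iff] at hK hK'
    omega
  · exact half_tsum_abs_sub_shift_lt_one (convPow_nonneg hp L)
      (summable_of_hasFiniteSupport (support_convPow_finite hfin L)) (tsum_convPow hfin hsum L)
      hK hK'

theorem convolution_power_overlaps_unit_shift
    (p : ℤ → ℝ) (hp : ∀ n, 0 ≤ p n)
    (hfin : (Function.support p).Finite)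
    (hsum : ∑' n : ℤ, p n = 1)
    (n₀ : ℤ) (hn₀ : 0 < p n₀) (hmin : ∀ n, 0 < p n → n₀ ≤ n)
    (htwo : ∃ n, n ≠ n₀ ∧ 0 < p n)
    (hgcd : ∀ e : ℕ, (∀ n, 0 < p n → (e : ℤ) ∣ (n - n₀)) → e = 1) :
    ∃ L : ℕ, 0 < L ∧
      (1 / 2) * ∑' n : ℤ, |convPow p L n - convPow p L (n + 1)| < 1 ∧
      ∃ K : ℤ, 0 < convPow p L K ∧ 0 < convPow p L (K - 1) :=
  convolution_power_overlaps_unit_shift_general p hp hfin hsum n₀ hn₀ hgcd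

end
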